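/- arXiv:2501.04565 — 2 statements merged into one kernel-verified Lean document; each statement's English description precedes it below -/
import Mathlib

section
/- Let X⋆ ∈ ℝ^{I₁×I₂×I₃} have tubal rank R with skinny t-SVD X⋆ = U⋆*Σ⋆*V⋆ᵀ. For any L ∈ ℝ^{I₁×R×I₃} and R ∈ ℝ^{I₂×R×I₃}, if dist(L,R;L⋆,R⋆) ≤ (ε/√I₃)·σ_min(X⋆) for some 0 < ε < 1, then the infimum defining dist(L,R;L⋆,R⋆) is attained at some Q ∈ GL(R); that is, an invertible optimal alignment tensor between (L,R) and (L⋆,R⋆) exists. -/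
open scoped BigOperators
open Matrix

/-- An order-3 real tensor. -/
abbrev Tensor (I₁ I₂ I₃ : ℕ) := Fin I₁ → Fin I₂ → Fin I₃ → ℝ

namespace RTPCA

variable {I₁ I₂ I₃ J R : ℕ}

/-- The t-product, computed by circular convolution along the third mode
(equivalently, slice-wise products in the Fourier domain). -/
noncomputable def tprod (A : Tensor I₁ I₂ I₃) (B : Tensor I₂ J I₃) : Tensor I₁ J I₃ :=
  fun i j k => ∑ l : Fin I₂, ∑ t : Fin I₃, A i l t * B l j (k - t)

/-- The tensor transpose: transpose each frontal slice and reverse the order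
of the frontal slices 2 through I₃. -/
def tT (A : Tensor I₁ I₂ I₃) : Tensor I₂ I₁ I₃ :=
  fun j i k => A i j (-k)

/-- The identity tensor: first frontal slice is the identity, the rest are zero. -/
def idT (R I₃ : ℕ) : Tensor R R I₃ :=
  fun i j k => if i = j ∧ (k : ℕ) = 0 then 1 else 0

/-- Discrete Fourier transform along the third mode. -/
noncomputable def dft (A : Tensor I₁ I₂ I₃) (i : Fin I₁) (j : Fin I₂) (k : Fin I₃) : ℂ :=
  ∑ t : Fin I₃, (A i j t : ℂ) *
    Complex.exp (-(2 * Real.pi * Complex.I * (k.val : ℂ) * (t.val : ℂ)) / (I₃ : ℂ))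

/-- Fourier-domain frontal slice. -/
noncomputable def fSlice (A : Tensor I₁ I₂ I₃) (k : Fin I₃) : Matrix (Fin I₁) (Fin I₂) ℂ :=
  Matrix.of fun i j => dft A i j k

/-- Inverse DFT along the third mode (real part). -/
noncomputable def invDft (F : Fin I₁ → Fin I₂ → Fin I₃ → ℂ) : Tensor I₁ I₂ I₃ :=
  fun i j t =>
    ((∑ k : Fin I₃, F i j k *
      Complex.exp ((2 * Real.pi * Complex.I * (k.val : ℂ) * (t.val : ℂ)) / (I₃ : ℂ))) / (I₃ : ℂ)).re

/-- Squared Frobenius norm. -/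
noncomputable def fro2 (A : Tensor I₁ I₂ I₃) : ℝ := ∑ i, ∑ j, ∑ k, (A i j k) ^ 2

/-- Frobenius norm. -/
noncomputable def froNorm (A : Tensor I₁ I₂ I₃) : ℝ := Real.sqrt (fro2 A)

/-- Entrywise sup norm ‖A‖_∞. -/
noncomputable def infNorm (A : Tensor I₁ I₂ I₃) : ℝ := ⨆ i, ⨆ j, ⨆ k, |A i j k|

/-- ℓ_{2,∞} norm: largest ℓ₂ norm of a horizontal slice. -/
noncomputable def twoInfNorm (A : Tensor I₁ I₂ I₃) : ℝ :=
  ⨆ i, Real.sqrt (∑ j, ∑ k, (A i j k) ^ 2)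

/-- ℓ_{1,∞} norm: largest ℓ₁ norm of a horizontal slice. -/
noncomputable def oneInfNorm (A : Tensor I₁ I₂ I₃) : ℝ := ⨆ i, ∑ j, ∑ k, |A i j k|

/-- Spectral norm (largest singular value) of a complex matrix. -/
noncomputable def matSpecNorm {m n : ℕ} (M : Matrix (Fin m) (Fin n) ℂ) : ℝ :=
  ‖LinearMap.toContinuousLinearMap (Matrix.toEuclideanLin M)‖

/-- Tensor spectral norm = tensor operator norm: the largest singular value of
the Fourier-domain frontal slices. -/
noncomputable def specNorm (A : Tensor I₁ I₂ I₃) : ℝ :=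
  ⨆ k : Fin I₃, matSpecNorm (fSlice A k)

/-- f-diagonal in the Fourier domain with strictly positive diagonal entries. -/
def FDiagPos (S : Tensor R R I₃) : Prop :=
  (∀ k, ∀ i j : Fin R, i ≠ j → fSlice S k i j = 0) ∧
  (∀ k, ∀ i : Fin R, 0 < (fSlice S k i i).re ∧ (fSlice S k i i).im = 0)

/-- f-diagonal in the Fourier domain with nonnegative diagonal entries. -/
def FDiagNonneg (S : Tensor R R I₃) : Prop :=
  (∀ k, ∀ i j : Fin R, i ≠ j → fSlice S k i j = 0) ∧
  (∀ k, ∀ i : Fin R, 0 ≤ (fSlice S k i i).re ∧ (fSlice S k i i).im = 0)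

/-- Skinny t-SVD with tubal rank R (strictly positive Fourier-domain diagonal). -/
structure IsSkinnyTSVD (X : Tensor I₁ I₂ I₃) (U : Tensor I₁ R I₃)
    (S : Tensor R R I₃) (V : Tensor I₂ R I₃) : Prop where
  decomp : X = tprod (tprod U S) (tT V)
  orthU : tprod (tT U) U = idT R I₃
  orthV : tprod (tT V) V = idT R I₃
  diag : FDiagPos S

/-- Skinny t-SVD with tubal rank at most R (nonnegative diagonal allowed). -/
structure IsSkinnyTSVDLe (X : Tensor I₁ I₂ I₃) (U : Tensor I₁ R I₃)
    (S : Tensor R R I₃) (V : Tensor I₂ R I₃) : Prop where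
  decomp : X = tprod (tprod U S) (tT V)
  orthU : tprod (tT U) U = idT R I₃
  orthV : tprod (tT V) V = idT R I₃
  diag : FDiagNonneg S

/-- σ_min: the smallest Fourier-domain diagonal entry of Σ. -/
noncomputable def sigmaMin (S : Tensor R R I₃) : ℝ :=
  ⨅ k : Fin I₃, ⨅ i : Fin R, (fSlice S k i i).re

/-- σ_max (= σ₁): the largest Fourier-domain diagonal entry of Σ. -/
noncomputable def sigmaMax (S : Tensor R R I₃) : ℝ :=
  ⨆ k : Fin I₃, ⨆ i : Fin R, (fSlice S k i i).re

/-- Condition number κ = σ_max / σ_min. -/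
noncomputable def condNum (S : Tensor R R I₃) : ℝ := sigmaMax S / sigmaMin S

/-- Σ^{1/2}: entrywise square roots in the Fourier domain. -/
noncomputable def sqrtT (S : Tensor R R I₃) : Tensor R R I₃ :=
  invDft fun i j k => (Real.sqrt ((dft S i j k).re) : ℂ)

/-- Σ^{-1/2}: entrywise reciprocal square roots in the Fourier domain. -/
noncomputable def invSqrtT (S : Tensor R R I₃) : Tensor R R I₃ :=
  invDft fun i j k => (((Real.sqrt ((dft S i j k).re))⁻¹ : ℝ) : ℂ)

/-- `Qi` is a two-sided t-product inverse of `Q` (i.e. `Q ∈ GL(R)`). -/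
def TInv (Q Qi : Tensor R R I₃) : Prop :=
  tprod Q Qi = idT R I₃ ∧ tprod Qi Q = idT R I₃

/-- Alignment error (the quantity inside the infimum defining `distT`)
for a given invertible Q with inverse Qi. -/
noncomputable def alignErr (L Ls : Tensor I₁ R I₃) (Rt Rs : Tensor I₂ R I₃)
    (Sh : Tensor R R I₃) (Q Qi : Tensor R R I₃) : ℝ :=
  Real.sqrt ((froNorm (tprod (tprod L Q - Ls) Sh)) ^ 2 +
    (froNorm (tprod (tprod Rt (tT Qi) - Rs) Sh)) ^ 2)

/-- The distance metric dist(L,R;L⋆,R⋆): the infimum of alignment errors over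
invertible tensors Q, where `Sh` is Σ⋆^{1/2}. -/
noncomputable def distT (L Ls : Tensor I₁ R I₃) (Rt Rs : Tensor I₂ R I₃)
    (Sh : Tensor R R I₃) : ℝ :=
  sInf {d : ℝ | ∃ Q Qi : Tensor R R I₃, TInv Q Qi ∧ d = alignErr L Ls Rt Rs Sh Q Qi}

/-- Q (with inverse Qi) is an optimal alignment tensor: it attains the infimum
defining the distance metric. -/
def IsOptAlign (L Ls : Tensor I₁ R I₃) (Rt Rs : Tensor I₂ R I₃)
    (Sh : Tensor R R I₃) (Q Qi : Tensor R R I₃) : Prop :=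
  TInv Q Qi ∧ alignErr L Ls Rt Rs Sh Q Qi = distT L Ls Rt Rs Sh

/-- Entrywise soft-thresholding. -/
noncomputable def softThresh (ζ : ℝ) (A : Tensor I₁ I₂ I₃) : Tensor I₁ I₂ I₃ :=
  fun i j k => Real.sign (A i j k) * max 0 (|A i j k| - ζ)

/-- Support: the set of index triples at which the tensor is nonzero. -/
def supp (A : Tensor I₁ I₂ I₃) : Set (Fin I₁ × Fin I₂ × Fin I₃) :=
  {p | A p.1 p.2.1 p.2.2 ≠ 0}

/-- α-sparsity: every horizontal, lateral and frontal slice has at most an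
α fraction of nonzero entries. -/
def IsSparse (α : ℝ) (S : Tensor I₁ I₂ I₃) : Prop :=
  (∀ i₁ : Fin I₁, ({p : Fin I₂ × Fin I₃ | S i₁ p.1 p.2 ≠ 0}.ncard : ℝ) ≤ α * I₂ * I₃) ∧
  (∀ i₂ : Fin I₂, ({p : Fin I₁ × Fin I₃ | S p.1 i₂ p.2 ≠ 0}.ncard : ℝ) ≤ α * I₁ * I₃) ∧
  (∀ i₃ : Fin I₃, ({p : Fin I₁ × Fin I₂ | S p.1 p.2 i₃ ≠ 0}.ncard : ℝ) ≤ α * I₁ * I₂)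

/-- Tensor μ-incoherence conditions for the skinny t-SVD factors U, V. -/
def Incoherent (μ : ℝ) (U : Tensor I₁ R I₃) (V : Tensor I₂ R I₃) : Prop :=
  twoInfNorm U ≤ Real.sqrt (μ * R / I₁) ∧ twoInfNorm V ≤ Real.sqrt (μ * R / I₂)

/-- Top-R truncated t-SVD of A: a skinny t-SVD-shaped factorization which, in
every Fourier-domain frontal slice, keeps R largest singular values together
with their singular vectors (the residual is orthogonal to the kept singular
vectors and its spectral norm is at most every kept singular value). -/
structure IsTruncTSVD (A : Tensor I₁ I₂ I₃) (U : Tensor I₁ R I₃)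
    (S : Tensor R R I₃) (V : Tensor I₂ R I₃) : Prop where
  orthU : tprod (tT U) U = idT R I₃
  orthV : tprod (tT V) V = idT R I₃
  diag : FDiagNonneg S
  leftOrth : ∀ k, (fSlice U k)ᴴ * (fSlice A k - fSlice (tprod (tprod U S) (tT V)) k) = 0
  rightOrth : ∀ k, (fSlice A k - fSlice (tprod (tprod U S) (tT V)) k) * fSlice V k = 0
  topR : ∀ k, ∀ r : Fin R,
    matSpecNorm (fSlice A k - fSlice (tprod (tprod U S) (tT V)) k) ≤ (fSlice S k r r).re

end RTPCA

open RTPCA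

/-!
The pairs `(Q, Q⁻¹)` form a closed set on which the alignment error is continuous, so the
infimum is attained as soon as a sublevel set lying strictly above it is bounded. Since `ε < 1`
there is a level `b` above the distance with `√I₃ · b < σ_min`. In every Fourier slice
`L̂ Q̂ Σ̂^{1/2} = Û Σ̂ + Ê` with `‖Ê‖ ≤ √I₃ · b`; as `Û` is an isometry, `Û Σ̂ + Ê` is bounded
below by `σ_min - √I₃ · b > 0`, which bounds `Q̂⁻¹` by `L̂`. The same argument for the right
factor bounds `Q̂`, and the inverse DFT turns the slice bounds into entrywise bounds.
-/

lemma ZMod.finEquiv_apply {n : ℕ} [NeZero n] (x : Fin n) :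
    ZMod.finEquiv n x = (x.val : ZMod n) := by
  obtain ⟨m, rfl⟩ : ∃ m, n = m + 1 := Nat.exists_eq_succ_of_ne_zero (NeZero.ne n)
  exact (Fin.cast_val_eq_self x).symm

namespace Fin

variable {n : ℕ} [NeZero n]

noncomputable def stdAddChar (n : ℕ) [NeZero n] : AddChar (Fin n) ℂ :=
  ZMod.stdAddChar.compAddMonoidHom ((ZMod.finEquiv n).toAddEquiv : Fin n →+ ZMod n)

lemma stdAddChar_apply (x : Fin n) : stdAddChar n x = ZMod.stdAddChar (ZMod.finEquiv n x) :=
  rfl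

lemma exp_eq_stdAddChar_mul (k t : Fin n) :
    Complex.exp (2 * Real.pi * Complex.I * k.val * t.val / n) = stdAddChar n (k * t) := by
  rw [stdAddChar_apply, map_mul, ZMod.finEquiv_apply, ZMod.finEquiv_apply, ← Nat.cast_mul,
    ZMod.stdAddChar_apply, ZMod.toCircle_natCast]
  push_cast
  ring_nf

lemma exp_neg_eq_stdAddChar_neg_mul (k t : Fin n) :
    Complex.exp (-(2 * Real.pi * Complex.I * k.val * t.val) / n) = stdAddChar n (-(k * t)) := by
  rw [AddChar.map_neg_eq_inv, ← exp_eq_stdAddChar_mul, ← Complex.exp_neg, neg_div]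

lemma sum_stdAddChar_mul (a : Fin n) :
    ∑ t : Fin n, stdAddChar n (a * t) = if a = 0 then (n : ℂ) else 0 := by
  classical
  have h := AddChar.sum_mulShift (ZMod.finEquiv n a) (ZMod.isPrimitive_stdAddChar n)
  rw [← (ZMod.finEquiv n).toEquiv.sum_comp] at h
  simpa [stdAddChar_apply, mul_comm, ZMod.card] using h

lemma sum_stdAddChar_mul_mul_neg (a b : Fin n) :
    ∑ t : Fin n, stdAddChar n (a * t) * stdAddChar n (-(b * t)) =
      if a = b then (n : ℂ) else 0 := by
  have h (t : Fin n) :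
      stdAddChar n (a * t) * stdAddChar n (-(b * t)) = stdAddChar n ((a - b) * t) := by
    rw [← AddChar.map_add_eq_mul, sub_mul, sub_eq_add_neg]
  simp_rw [h, sum_stdAddChar_mul, sub_eq_zero]

end Fin

namespace Matrix

open scoped Matrix.Norms.L2Operator

variable {𝕜 : Type*} [RCLike 𝕜] {m n l : Type*} [Fintype m] [Fintype n] [Fintype l]
  [DecidableEq n] [DecidableEq l]

lemma l2_opNorm_le_sqrt_sum_sq (A : Matrix m n 𝕜) : ‖A‖ ≤ √(∑ i, ∑ j, ‖A i j‖ ^ 2) := by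
  rw [l2_opNorm_def]
  refine ContinuousLinearMap.opNorm_le_bound _ (by positivity) fun x => ?_
  refine (sq_le_sq₀ (norm_nonneg _) (by positivity)).mp ?_
  rw [mul_pow, Real.sq_sqrt (by positivity), EuclideanSpace.norm_sq_eq, EuclideanSpace.norm_sq_eq,
    Finset.sum_mul]
  refine Finset.sum_le_sum fun i _ => ?_
  calc ‖(A *ᵥ WithLp.ofLp x) i‖ ^ 2 ≤ (∑ j, ‖A i j‖ * ‖x j‖) ^ 2 := by
        gcongr
        exact (norm_sum_le _ _).trans_eq (by simp [norm_mul])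
    _ ≤ (∑ j, ‖A i j‖ ^ 2) * ∑ j, ‖x j‖ ^ 2 := Finset.sum_mul_sq_le_sq_mul_sq _ _ _

lemma norm_entry_le_l2_opNorm (A : Matrix m n 𝕜) (i : m) (j : n) : ‖A i j‖ ≤ ‖A‖ := by
  have h := l2_opNorm_mulVec A (EuclideanSpace.single j 1)
  rw [PiLp.norm_single, norm_one, mul_one] at h
  refine le_trans (le_of_eq ?_) ((PiLp.norm_apply_le _ i).trans h)
  simp [mulVec_single]

lemma l2_opNorm_mul_of_conjTranspose_mul_self_eq_one {U : Matrix m n 𝕜} (hU : Uᴴ * U = 1)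
    (X : Matrix n l 𝕜) : ‖U * X‖ = ‖X‖ := by
  have h : ‖U * X‖ * ‖U * X‖ = ‖X‖ * ‖X‖ := by
    rw [← l2_opNorm_conjTranspose_mul_self, ← l2_opNorm_conjTranspose_mul_self, conjTranspose_mul,
      Matrix.mul_assoc, ← Matrix.mul_assoc Uᴴ, hU, Matrix.one_mul]
  exact (mul_self_inj (norm_nonneg _) (norm_nonneg _)).mp h

lemma mul_l2_opNorm_le_diagonal_mul {d : n → 𝕜} {c : ℝ} (hc : 0 < c) (hd : ∀ i, c ≤ ‖d i‖)
    (X : Matrix n l 𝕜) : c * ‖X‖ ≤ ‖diagonal d * X‖ := by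
  have hd0 (i : n) : d i ≠ 0 := norm_pos_iff.mp (hc.trans_le (hd i))
  have hX : X = diagonal d⁻¹ * (diagonal d * X) := by
    rw [← Matrix.mul_assoc, diagonal_mul_diagonal]
    simp [hd0]
  have hinv : ‖d⁻¹‖ ≤ c⁻¹ := by
    refine (pi_norm_le_iff_of_nonneg (by positivity)).mpr fun i => ?_
    rw [Pi.inv_apply, norm_inv]
    exact inv_anti₀ hc (hd i)
  calc c * ‖X‖ ≤ c * (c⁻¹ * ‖diagonal d * X‖) := by
        gcongr
        conv_lhs => rw [hX]
        refine (l2_opNorm_mul _ _).trans ?_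
        rw [l2_opNorm_diagonal]
        gcongr
    _ = ‖diagonal d * X‖ := by field_simp

lemma l2_opNorm_le_of_mul_diagonal_sqrt_eq {W U E : Matrix m n 𝕜} {Q N : Matrix n n 𝕜}
    {d : n → ℝ} {σ σ' β : ℝ} (hU : Uᴴ * U = 1) (hd : ∀ i, σ ≤ d i) (hd' : ∀ i, d i ≤ σ')
    (hE : ‖E‖ ≤ β) (hβ : β < σ) (hQN : Q * N = 1)
    (h : W * Q * diagonal (fun i => (√(d i) : 𝕜)) = U * diagonal (fun i => (d i : 𝕜)) + E) :
    ‖N‖ ≤ √σ' * ‖W‖ / (σ - β) := by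
  have hσ : 0 < σ := ((norm_nonneg E).trans hE).trans_lt hβ
  have hsqrt (i : n) : (√(d i) : 𝕜) ≠ 0 := by
    simpa using (Real.sqrt_pos.mpr (hσ.trans_le (hd i))).ne'
  set X := diagonal (fun i => (√(d i) : 𝕜)⁻¹) * N
  have hN : N = diagonal (fun i => (√(d i) : 𝕜)) * X := by
    rw [← Matrix.mul_assoc, diagonal_mul_diagonal]
    simp [hsqrt]
  have hW : W = U * (diagonal (fun i => (d i : 𝕜)) * X) + E * X := by
    rw [← Matrix.mul_assoc, ← Matrix.add_mul, ← h, Matrix.mul_assoc _ _ X, ← hN, Matrix.mul_assoc,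
      hQN, Matrix.mul_one]
  have hX : (σ - β) * ‖X‖ ≤ ‖W‖ := by
    have hDX : σ * ‖X‖ ≤ ‖diagonal (fun i => (d i : 𝕜)) * X‖ :=
      mul_l2_opNorm_le_diagonal_mul hσ
        (fun i => by simpa [abs_of_pos (hσ.trans_le (hd i))] using hd i) X
    have hEX : ‖E * X‖ ≤ β * ‖X‖ := (l2_opNorm_mul E X).trans (by gcongr)
    rw [hW]
    refine le_trans ?_ (norm_sub_le_norm_add _ _)
    rw [l2_opNorm_mul_of_conjTranspose_mul_self_eq_one hU]
    linarith
  have hsqrtD : ‖diagonal (fun i => (√(d i) : 𝕜))‖ ≤ √σ' := by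
    rw [l2_opNorm_diagonal]
    refine (pi_norm_le_iff_of_nonneg (Real.sqrt_nonneg _)).mpr fun i => ?_
    simpa [abs_of_nonneg (Real.sqrt_nonneg _)] using Real.sqrt_le_sqrt (hd' i)
  calc ‖N‖ ≤ √σ' * ‖X‖ := by
        rw [hN]
        exact (l2_opNorm_mul _ _).trans (by gcongr)
    _ ≤ √σ' * ‖W‖ / (σ - β) := by
        rw [mul_div_assoc]
        gcongr
        rw [le_div_iff₀ (by linarith)]
        linarith

end Matrix

lemma exists_isMinOn_of_isBounded_sublevel {X : Type*} [PseudoMetricSpace X] [ProperSpace X]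
    {s : Set X} {f : X → ℝ} (hf : Continuous f) (hs : IsClosed s) {x₀ : X} (hx₀ : x₀ ∈ s) {b : ℝ}
    (hb : f x₀ < b) (hbdd : Bornology.IsBounded {x ∈ s | f x ≤ b}) :
    ∃ x ∈ s, IsMinOn f s x := by
  refine hf.continuousOn.exists_isMinOn' hs hx₀ ?_
  filter_upwards [Filter.mem_inf_of_left hbdd.isCompact_closure.compl_mem_cocompact,
    Filter.mem_inf_of_right (Filter.mem_principal_self s)] with x hxK hxs
  by_contra! hlt
  exact hxK (subset_closure ⟨hxs, (hlt.trans hb).le⟩)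

namespace RTPCA

open Bornology Fin
open scoped Matrix.Norms.L2Operator

variable {I₁ I₂ I₃ J R : ℕ}

section Fourier

variable [NeZero I₃]

lemma dft_eq_sum_stdAddChar (A : Tensor I₁ I₂ I₃) (i : Fin I₁) (j : Fin I₂) (k : Fin I₃) :
    dft A i j k = ∑ t, (A i j t : ℂ) * stdAddChar I₃ (-(k * t)) := by
  simp only [dft, exp_neg_eq_stdAddChar_neg_mul]

lemma dft_tprod (A : Tensor I₁ I₂ I₃) (B : Tensor I₂ J I₃) (i : Fin I₁) (j : Fin J)
    (k : Fin I₃) : dft (tprod A B) i j k = ∑ l, dft A i l k * dft B l j k := by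
  simp only [dft_eq_sum_stdAddChar, tprod, Finset.sum_mul_sum]
  push_cast
  simp only [Finset.sum_mul]
  rw [Finset.sum_comm]
  refine Finset.sum_congr rfl fun l _ => ?_
  rw [Finset.sum_comm]
  refine Finset.sum_congr rfl fun s _ => ?_
  rw [← Equiv.sum_comp (Equiv.addRight s)]
  refine Finset.sum_congr rfl fun u _ => ?_
  simp only [Equiv.coe_addRight, add_sub_cancel_right, mul_add, neg_add, AddChar.map_add_eq_mul]
  ring

lemma dft_tT (A : Tensor I₁ I₂ I₃) (i : Fin I₁) (j : Fin I₂) (k : Fin I₃) :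
    dft (tT A) j i k = starRingEnd ℂ (dft A i j k) := by
  simp only [dft_eq_sum_stdAddChar, tT, map_sum, map_mul, Complex.conj_ofReal,
    ← AddChar.map_neg_eq_conj, neg_neg]
  rw [← Equiv.sum_comp (Equiv.neg (Fin I₃))]
  simp [mul_neg]

lemma dft_neg (A : Tensor I₁ I₂ I₃) (i : Fin I₁) (j : Fin I₂) (k : Fin I₃) :
    dft A i j (-k) = starRingEnd ℂ (dft A i j k) := by
  simp [dft_eq_sum_stdAddChar, ← AddChar.map_neg_eq_conj]

lemma dft_sub (A B : Tensor I₁ I₂ I₃) (i : Fin I₁) (j : Fin I₂) (k : Fin I₃) :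
    dft (A - B) i j k = dft A i j k - dft B i j k := by
  simp [dft_eq_sum_stdAddChar, sub_mul]

lemma dft_idT (i j : Fin R) (k : Fin I₃) : dft (idT R I₃) i j k = if i = j then 1 else 0 := by
  rw [dft_eq_sum_stdAddChar, Finset.sum_eq_single 0]
  · simp [idT, apply_ite]
  · intro t _ ht
    simp [idT, Fin.val_ne_zero_iff.mpr ht]
  · simp

lemma natCast_mul_eq_sum_dft (A : Tensor I₁ I₂ I₃) (i : Fin I₁) (j : Fin I₂) (t : Fin I₃) :
    (I₃ : ℂ) * A i j t = ∑ k, dft A i j k * stdAddChar I₃ (k * t) := by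
  simp only [dft_eq_sum_stdAddChar, Finset.sum_mul]
  rw [Finset.sum_comm]
  have h (s k : Fin I₃) : stdAddChar I₃ (-(k * s)) * stdAddChar I₃ (k * t) =
      stdAddChar I₃ (t * k) * stdAddChar I₃ (-(s * k)) := by
    rw [mul_comm, mul_comm k, mul_comm k]
  simp_rw [mul_assoc, ← Finset.mul_sum, h, sum_stdAddChar_mul_mul_neg]
  simp [mul_comm]

/-- Hermitian symmetry of `F` makes the inverse transform real, so the real part taken by
`invDft` loses nothing. -/
lemma dft_invDft (F : Fin I₁ → Fin I₂ → Fin I₃ → ℂ)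
    (hF : ∀ i j k, F i j (-k) = starRingEnd ℂ (F i j k)) (i : Fin I₁) (j : Fin I₂) (k : Fin I₃) :
    dft (invDft F) i j k = F i j k := by
  set S : Fin I₃ → ℂ := fun t => ∑ k', F i j k' * stdAddChar I₃ (k' * t) with hS
  have hS_real (t : Fin I₃) : starRingEnd ℂ (S t) = S t := by
    simp only [hS, map_sum, map_mul, ← AddChar.map_neg_eq_conj, ← hF]
    rw [← Equiv.sum_comp (Equiv.neg (Fin I₃))]
    simp [neg_mul]
  have hinv (t : Fin I₃) : (invDft F i j t : ℂ) = S t / I₃ := by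
    have h : invDft F i j t = (S t / I₃).re := by simp [invDft, exp_eq_stdAddChar_mul, hS]
    rw [h, ← Complex.conj_eq_iff_re, map_div₀, hS_real, Complex.conj_natCast]
  simp_rw [dft_eq_sum_stdAddChar, hinv, hS, div_mul_eq_mul_div, ← Finset.sum_div, Finset.sum_mul]
  rw [Finset.sum_comm]
  simp_rw [mul_assoc, ← Finset.mul_sum, sum_stdAddChar_mul_mul_neg]
  simp [NeZero.ne]

lemma dft_sqrtT (S : Tensor R R I₃) (i j : Fin R) (k : Fin I₃) :
    dft (sqrtT S) i j k = (√(dft S i j k).re : ℂ) :=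
  dft_invDft _ (fun i j k => by simp [dft_neg]) i j k

lemma norm_dft_le (A : Tensor I₁ I₂ I₃) (i : Fin I₁) (j : Fin I₂) (k : Fin I₃) :
    ‖dft A i j k‖ ≤ ∑ t, |A i j t| := by
  rw [dft_eq_sum_stdAddChar]
  refine (norm_sum_le _ _).trans_eq ?_
  simp

lemma norm_dft_sq_le (A : Tensor I₁ I₂ I₃) (i : Fin I₁) (j : Fin I₂) (k : Fin I₃) :
    ‖dft A i j k‖ ^ 2 ≤ I₃ * ∑ t, A i j t ^ 2 := by
  calc ‖dft A i j k‖ ^ 2 ≤ (∑ t, |A i j t|) ^ 2 := by gcongr; exact norm_dft_le A i j k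
    _ ≤ I₃ * ∑ t, |A i j t| ^ 2 := by
        simpa using sq_sum_le_card_mul_sum_sq (s := Finset.univ) (f := fun t => |A i j t|)
    _ = I₃ * ∑ t, A i j t ^ 2 := by simp_rw [sq_abs]

lemma natCast_mul_abs_le_sum_norm_dft (A : Tensor I₁ I₂ I₃) (i : Fin I₁) (j : Fin I₂)
    (t : Fin I₃) : I₃ * |A i j t| ≤ ∑ k, ‖dft A i j k‖ := by
  have h := congrArg norm (natCast_mul_eq_sum_dft A i j t)
  rw [norm_mul, Complex.norm_natCast, Complex.norm_real, Real.norm_eq_abs] at h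
  rw [h]
  refine (norm_sum_le _ _).trans_eq ?_
  simp

end Fourier

lemma subsingleton_tensor (h : I₁ = 0 ∨ I₃ = 0) : Subsingleton (Tensor I₁ I₂ I₃) :=
  ⟨fun _ _ => funext fun i => by
    rcases h with rfl | rfl
    · exact i.elim0
    · exact funext fun _ => funext fun k => k.elim0⟩

lemma norm_le_of_forall_abs_le {A : Tensor I₁ I₂ I₃} {C : ℝ} (hC : 0 ≤ C)
    (h : ∀ i j k, |A i j k| ≤ C) : ‖A‖ ≤ C :=
  (pi_norm_le_iff_of_nonneg hC).mpr fun i => (pi_norm_le_iff_of_nonneg hC).mpr fun j =>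
    (pi_norm_le_iff_of_nonneg hC).mpr fun k => h i j k

lemma idT_tprod (A : Tensor R J I₃) : tprod (idT R I₃) A = A := by
  funext i j k
  have : NeZero I₃ := ⟨k.pos.ne'⟩
  simp [tprod, idT, ite_and, Fin.val_eq_zero_iff]

lemma tInv_idT : TInv (idT R I₃) (idT R I₃) := ⟨idT_tprod _, idT_tprod _⟩

lemma continuous_tprod :
    Continuous fun p : Tensor I₁ I₂ I₃ × Tensor I₂ J I₃ => tprod p.1 p.2 := by
  unfold tprod
  fun_prop

lemma continuous_alignErr (L Ls : Tensor I₁ R I₃) (Rt Rs : Tensor I₂ R I₃) (Sh : Tensor R R I₃) :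
    Continuous fun p : Tensor R R I₃ × Tensor R R I₃ => alignErr L Ls Rt Rs Sh p.1 p.2 := by
  unfold alignErr froNorm fro2 tprod tT
  fun_prop

lemma froNorm_nonneg (A : Tensor I₁ I₂ I₃) : 0 ≤ froNorm A := Real.sqrt_nonneg _

lemma froNorm_left_le_alignErr (L Ls : Tensor I₁ R I₃) (Rt Rs : Tensor I₂ R I₃)
    (Sh Q Qi : Tensor R R I₃) :
    froNorm (tprod (tprod L Q - Ls) Sh) ≤ alignErr L Ls Rt Rs Sh Q Qi :=
  Real.le_sqrt_of_sq_le (le_add_of_nonneg_right (sq_nonneg _))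

lemma froNorm_right_le_alignErr (L Ls : Tensor I₁ R I₃) (Rt Rs : Tensor I₂ R I₃)
    (Sh Q Qi : Tensor R R I₃) :
    froNorm (tprod (tprod Rt (tT Qi) - Rs) Sh) ≤ alignErr L Ls Rt Rs Sh Q Qi :=
  Real.le_sqrt_of_sq_le (le_add_of_nonneg_left (sq_nonneg _))

lemma sigmaMin_le (S : Tensor R R I₃) (k : Fin I₃) (i : Fin R) :
    sigmaMin S ≤ (fSlice S k i i).re :=
  (ciInf_le (Set.finite_range _).bddBelow k).trans (ciInf_le (Set.finite_range _).bddBelow i)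

lemma le_sigmaMax (S : Tensor R R I₃) (k : Fin I₃) (i : Fin R) :
    (fSlice S k i i).re ≤ sigmaMax S :=
  (le_ciSup (Set.finite_range _).bddAbove i).trans
    (le_ciSup (f := fun k => ⨆ i, (fSlice S k i i).re) (Set.finite_range _).bddAbove k)

lemma FDiagPos.sigmaMin_pos [NeZero I₃] [NeZero R] {S : Tensor R R I₃} (hS : FDiagPos S) :
    0 < sigmaMin S := by
  obtain ⟨k, hk⟩ :=
    exists_eq_ciInf_of_finite (f := fun k : Fin I₃ => ⨅ i : Fin R, (fSlice S k i i).re)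
  obtain ⟨i, hi⟩ := exists_eq_ciInf_of_finite (f := fun i : Fin R => (fSlice S k i i).re)
  rw [sigmaMin, ← hk, ← hi]
  exact (hS.2 k i).1

section Slices

variable [NeZero I₃]

lemma fSlice_tprod (A : Tensor I₁ I₂ I₃) (B : Tensor I₂ J I₃) (k : Fin I₃) :
    fSlice (tprod A B) k = fSlice A k * fSlice B k := by
  ext i j
  exact dft_tprod A B i j k

lemma fSlice_tT (A : Tensor I₁ I₂ I₃) (k : Fin I₃) : fSlice (tT A) k = (fSlice A k)ᴴ := by
  ext j i
  exact dft_tT A i j k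

lemma fSlice_idT (k : Fin I₃) : fSlice (idT R I₃) k = 1 := by
  ext i j
  exact dft_idT i j k

lemma fSlice_sub (A B : Tensor I₁ I₂ I₃) (k : Fin I₃) :
    fSlice (A - B) k = fSlice A k - fSlice B k := by
  ext i j
  exact dft_sub A B i j k

lemma fSlice_conjTranspose_mul_self {U : Tensor I₁ R I₃} (hU : tprod (tT U) U = idT R I₃)
    (k : Fin I₃) : (fSlice U k)ᴴ * fSlice U k = 1 := by
  rw [← fSlice_tT, ← fSlice_tprod, hU, fSlice_idT]

lemma fSlice_mul_fSlice_eq_one {Q Qi : Tensor R R I₃} (h : tprod Q Qi = idT R I₃)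
    (k : Fin I₃) : fSlice Q k * fSlice Qi k = 1 := by
  rw [← fSlice_tprod, h, fSlice_idT]

lemma FDiagPos.fSlice_sqrtT {S : Tensor R R I₃} (hS : FDiagPos S) (k : Fin I₃) :
    fSlice (sqrtT S) k = diagonal fun i => (√(fSlice S k i i).re : ℂ) := by
  ext i j
  rcases eq_or_ne i j with rfl | hij
  · simp [fSlice, dft_sqrtT]
  · have h0 : dft S i j k = 0 := hS.1 k i j hij
    simp [fSlice, dft_sqrtT, h0, hij]

lemma l2_opNorm_fSlice_le (A : Tensor I₁ I₂ I₃) (k : Fin I₃) :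
    ‖fSlice A k‖ ≤ √I₃ * froNorm A := by
  rw [froNorm, ← Real.sqrt_mul (Nat.cast_nonneg _)]
  refine (l2_opNorm_le_sqrt_sum_sq _).trans (Real.sqrt_le_sqrt ?_)
  rw [fro2, Finset.mul_sum]
  gcongr with i
  rw [Finset.mul_sum]
  gcongr with j
  exact norm_dft_sq_le A i j k

lemma abs_le_of_forall_l2_opNorm_fSlice_le {A : Tensor I₁ I₂ I₃} {C : ℝ}
    (h : ∀ k, ‖fSlice A k‖ ≤ C) (i : Fin I₁) (j : Fin I₂) (t : Fin I₃) : |A i j t| ≤ C := by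
  refine le_of_mul_le_mul_left ?_ (Nat.cast_pos.mpr (NeZero.pos I₃))
  calc (I₃ : ℝ) * |A i j t| ≤ ∑ k, ‖dft A i j k‖ := natCast_mul_abs_le_sum_norm_dft A i j t
    _ ≤ ∑ _k : Fin I₃, C :=
        Finset.sum_le_sum fun k _ => (norm_entry_le_l2_opNorm (fSlice A k) i j).trans (h k)
    _ = I₃ * C := by simp

lemma l2_opNorm_fSlice_le_of_alignment {A U : Tensor I₁ R I₃} {S Q N : Tensor R R I₃} {β : ℝ}
    (hU : tprod (tT U) U = idT R I₃) (hS : FDiagPos S) (hβ : β < sigmaMin S)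
    (hE : √I₃ * froNorm (tprod (tprod A Q - tprod U (sqrtT S)) (sqrtT S)) ≤ β)
    (k : Fin I₃) (hQN : fSlice Q k * fSlice N k = 1) :
    ‖fSlice N k‖ ≤ √(sigmaMax S) * ‖fSlice A k‖ / (sigmaMin S - β) := by
  refine l2_opNorm_le_of_mul_diagonal_sqrt_eq (fSlice_conjTranspose_mul_self hU k)
    (sigmaMin_le S k) (le_sigmaMax S k) ((l2_opNorm_fSlice_le _ k).trans hE) hβ hQN ?_
  have hsq : (diagonal fun i => (√(fSlice S k i i).re : ℂ)) *
      (diagonal fun i => (√(fSlice S k i i).re : ℂ)) =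
        diagonal fun i => ((fSlice S k i i).re : ℂ) := by
    rw [diagonal_mul_diagonal]
    congr 1
    funext i
    rw [← Complex.ofReal_mul, Real.mul_self_sqrt (hS.2 k i).1.le]
  rw [fSlice_tprod, fSlice_sub, fSlice_tprod, fSlice_tprod, hS.fSlice_sqrtT, Matrix.sub_mul,
    Matrix.mul_assoc (fSlice U k), hsq]
  exact (add_sub_cancel _ _).symm

lemma isBounded_setOf_tInv_alignErr_le {U : Tensor I₁ R I₃} {V : Tensor I₂ R I₃}
    {S : Tensor R R I₃} (hU : tprod (tT U) U = idT R I₃) (hV : tprod (tT V) V = idT R I₃)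
    (hS : FDiagPos S) (L : Tensor I₁ R I₃) (Rt : Tensor I₂ R I₃) {β : ℝ} (hβ : β < sigmaMin S) :
    IsBounded {p : Tensor R R I₃ × Tensor R R I₃ | TInv p.1 p.2 ∧
      √I₃ * alignErr L (tprod U (sqrtT S)) Rt (tprod V (sqrtT S)) (sqrtT S) p.1 p.2 ≤ β} := by
  have hgap : 0 < sigmaMin S - β := sub_pos.mpr hβ
  set C := √(sigmaMax S) * (√I₃ * (froNorm L + froNorm Rt)) / (sigmaMin S - β)
  have hC : 0 ≤ C := by
    have := froNorm_nonneg L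
    have := froNorm_nonneg Rt
    positivity
  have mem_ball {T : Tensor R R I₃} {I : ℕ} {W : Tensor I R I₃}
      (hT : ∀ k, ‖fSlice T k‖ ≤ √(sigmaMax S) * ‖fSlice W k‖ / (sigmaMin S - β))
      (hW : froNorm W ≤ froNorm L + froNorm Rt) : T ∈ Metric.closedBall 0 C := by
    refine mem_closedBall_zero_iff.mpr (norm_le_of_forall_abs_le hC
      (abs_le_of_forall_l2_opNorm_fSlice_le fun k => (hT k).trans ?_))
    dsimp only [C]
    gcongr
    exact (l2_opNorm_fSlice_le W k).trans (by gcongr)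
  refine ((Metric.isBounded_closedBall (x := 0) (r := C)).prod
    (Metric.isBounded_closedBall (x := 0) (r := C))).subset ?_
  rintro ⟨Q, Qi⟩ ⟨hQ, hA⟩
  have hsqrt := Real.sqrt_nonneg (I₃ : ℝ)
  refine ⟨mem_ball (W := Rt) (fun k => ?_) (le_add_of_nonneg_left (froNorm_nonneg L)),
    mem_ball (W := L) (fun k => ?_) (le_add_of_nonneg_right (froNorm_nonneg Rt))⟩
  · rw [← l2_opNorm_conjTranspose, ← fSlice_tT]
    refine l2_opNorm_fSlice_le_of_alignment hV hS hβ
      ((mul_le_mul_of_nonneg_left (froNorm_right_le_alignErr _ _ _ _ _ Q Qi) hsqrt).trans hA) k ?_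
    rw [fSlice_tT, fSlice_tT, ← conjTranspose_mul, fSlice_mul_fSlice_eq_one hQ.1,
      conjTranspose_one]
  · exact l2_opNorm_fSlice_le_of_alignment hU hS hβ
      ((mul_le_mul_of_nonneg_left (froNorm_left_le_alignErr _ _ _ _ _ Q Qi) hsqrt).trans hA) k
      (fSlice_mul_fSlice_eq_one hQ.1 k)

end Slices

lemma isOptAlign_of_forall_le {L Ls : Tensor I₁ R I₃} {Rt Rs : Tensor I₂ R I₃}
    {Sh Q Qi : Tensor R R I₃} (hQ : TInv Q Qi)
    (hmin : ∀ Q' Qi', TInv Q' Qi' → alignErr L Ls Rt Rs Sh Q Qi ≤ alignErr L Ls Rt Rs Sh Q' Qi') :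
    IsOptAlign L Ls Rt Rs Sh Q Qi := by
  refine ⟨hQ, Eq.symm (IsLeast.csInf_eq ⟨⟨Q, Qi, hQ, rfl⟩, ?_⟩)⟩
  rintro _ ⟨Q', Qi', hQ', rfl⟩
  exact hmin Q' Qi' hQ'

lemma exists_isOptAlign_of_isBounded {L Ls : Tensor I₁ R I₃} {Rt Rs : Tensor I₂ R I₃}
    {Sh : Tensor R R I₃} {b : ℝ} (hb : distT L Ls Rt Rs Sh < b)
    (hbdd : IsBounded {p : Tensor R R I₃ × Tensor R R I₃ |
      TInv p.1 p.2 ∧ alignErr L Ls Rt Rs Sh p.1 p.2 ≤ b}) :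
    ∃ Q Qi, IsOptAlign L Ls Rt Rs Sh Q Qi := by
  have hne : {d | ∃ Q Qi : Tensor R R I₃, TInv Q Qi ∧ d = alignErr L Ls Rt Rs Sh Q Qi}.Nonempty :=
    ⟨_, idT R I₃, idT R I₃, tInv_idT, rfl⟩
  obtain ⟨_, ⟨Q₀, Qi₀, hQ₀, rfl⟩, hb₀⟩ := exists_lt_of_csInf_lt hne hb
  have hclosed : IsClosed {p : Tensor R R I₃ × Tensor R R I₃ | TInv p.1 p.2} :=
    (isClosed_eq continuous_tprod continuous_const).inter
      (isClosed_eq (continuous_tprod.comp continuous_swap) continuous_const)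
  obtain ⟨⟨Q, Qi⟩, hQ, hmin⟩ := exists_isMinOn_of_isBounded_sublevel
    (continuous_alignErr L Ls Rt Rs Sh) hclosed (x₀ := (Q₀, Qi₀)) hQ₀ hb₀ hbdd
  exact ⟨Q, Qi, isOptAlign_of_forall_le hQ fun Q' Qi' hQ' => hmin (a := (Q', Qi')) hQ'⟩

end RTPCA

theorem optimal_alignment_exists_general
    {I₁ I₂ I₃ R : ℕ}
    (Xs : Tensor I₁ I₂ I₃) (Us : Tensor I₁ R I₃) (Sig : Tensor R R I₃) (Vs : Tensor I₂ R I₃)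
    (hsvd : IsSkinnyTSVD Xs Us Sig Vs)
    (L : Tensor I₁ R I₃) (Rt : Tensor I₂ R I₃)
    (ε : ℝ) (hε₁ : ε < 1)
    (hdist : distT L (tprod Us (sqrtT Sig)) Rt (tprod Vs (sqrtT Sig)) (sqrtT Sig)
      ≤ ε / Real.sqrt I₃ * sigmaMin Sig) :
    ∃ Q Qi : Tensor R R I₃,
      IsOptAlign L (tprod Us (sqrtT Sig)) Rt (tprod Vs (sqrtT Sig)) (sqrtT Sig) Q Qi := by
  by_cases hdeg : R = 0 ∨ I₃ = 0
  · have := subsingleton_tensor (I₂ := R) hdeg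
    exact exists_isOptAlign_of_isBounded (lt_add_one _) (Set.toFinite _).isBounded
  obtain ⟨hR, hI₃⟩ := not_or.mp hdeg
  have : NeZero R := ⟨hR⟩
  have : NeZero I₃ := ⟨hI₃⟩
  have hσ : 0 < sigmaMin Sig := hsvd.diag.sigmaMin_pos
  have hsqrt : 0 < √(I₃ : ℝ) := Real.sqrt_pos.mpr (Nat.cast_pos.mpr (NeZero.pos I₃))
  have hgap : ε / √I₃ * sigmaMin Sig < sigmaMin Sig / √I₃ := by
    rw [div_mul_eq_mul_div]
    exact div_lt_div_of_pos_right (mul_lt_of_lt_one_left hσ hε₁) hsqrt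
  obtain ⟨b, hb, hbσ⟩ := exists_between (hdist.trans_lt hgap)
  refine exists_isOptAlign_of_isBounded hb ((isBounded_setOf_tInv_alignErr_le hsvd.orthU
    hsvd.orthV hsvd.diag L Rt (β := √I₃ * b) ?_).subset fun p hp => ⟨hp.1, by gcongr; exact hp.2⟩)
  rwa [lt_div_iff₀ hsqrt, mul_comm] at hbσ

/-- existence of an invertible optimal alignment tensor. -/
theorem optimal_alignment_exists
    {I₁ I₂ I₃ R : ℕ}
    (Xs : Tensor I₁ I₂ I₃) (Us : Tensor I₁ R I₃) (Sig : Tensor R R I₃) (Vs : Tensor I₂ R I₃)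
    (hsvd : IsSkinnyTSVD Xs Us Sig Vs)
    (L : Tensor I₁ R I₃) (Rt : Tensor I₂ R I₃)
    (ε : ℝ) (hε₀ : 0 < ε) (hε₁ : ε < 1)
    (hdist : distT L (tprod Us (sqrtT Sig)) Rt (tprod Vs (sqrtT Sig)) (sqrtT Sig)
      ≤ ε / Real.sqrt I₃ * sigmaMin Sig) :
    ∃ Q Qi : Tensor R R I₃,
      IsOptAlign L (tprod Us (sqrtT Sig)) Rt (tprod Vs (sqrtT Sig)) (sqrtT Sig) Q Qi :=
  optimal_alignment_exists_general Xs Us Sig Vs hsvd L Rt ε hε₁ hdist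
end

section
/- Let X⋆, S⋆, X_k ∈ ℝ^{I₁×I₂×I₃}, set Y = X⋆ + S⋆, let ζ be a threshold with ζ ≥ ‖X⋆ − X_k‖_∞, and set S_{k+1} = T_ζ(Y − X_k). Then supp(S_{k+1}) ⊆ supp(S⋆) and ‖S⋆ − S_{k+1}‖_∞ ≤ ‖X⋆ − X_k‖_∞ + ζ ≤ 2ζ. -/
open scoped BigOperators
open Matrix

open RTPCA



lemma infNorm_nonneg' {I₁ I₂ I₃ : ℕ} (A : Tensor I₁ I₂ I₃) : 0 ≤ infNorm A := by
  unfold infNorm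
  refine Real.iSup_nonneg fun i => Real.iSup_nonneg fun j => Real.iSup_nonneg fun k => abs_nonneg _

lemma le_infNorm {I₁ I₂ I₃ : ℕ} (A : Tensor I₁ I₂ I₃) (i : Fin I₁) (j : Fin I₂) (k : Fin I₃) :
    |A i j k| ≤ infNorm A := by
  unfold infNorm
  calc |A i j k| ≤ ⨆ k, |A i j k| :=
      le_ciSup (f := fun k => |A i j k|) (Set.Finite.bddAbove (Set.finite_range _)) k
    _ ≤ ⨆ j, ⨆ k, |A i j k| :=
      le_ciSup (f := fun j => ⨆ k, |A i j k|) (Set.Finite.bddAbove (Set.finite_range _)) j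
    _ ≤ ⨆ i, ⨆ j, ⨆ k, |A i j k| :=
      le_ciSup (f := fun i => ⨆ j, ⨆ k, |A i j k|) (Set.Finite.bddAbove (Set.finite_range _)) i

lemma infNorm_le {I₁ I₂ I₃ : ℕ} (A : Tensor I₁ I₂ I₃) (c : ℝ) (hc : 0 ≤ c)
    (h : ∀ i j k, |A i j k| ≤ c) : infNorm A ≤ c := by
  unfold infNorm
  exact Real.iSup_le (fun i => Real.iSup_le (fun j => Real.iSup_le (fun k => h i j k) hc) hc) hc

lemma soft_dist (ζ x : ℝ) (hζ : 0 ≤ ζ) :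
    |x - Real.sign x * max 0 (|x| - ζ)| ≤ ζ := by
  rcases le_or_gt |x| ζ with h | h
  · rw [max_eq_left (by linarith)]
    simpa using h
  · have hx : x ≠ 0 := by
      intro h0; rw [h0] at h; simp at h; linarith
    rw [max_eq_right (by linarith)]
    have hs : Real.sign x * |x| = x := by
      rcases lt_trichotomy x 0 with h0 | h0 | h0
      · rw [Real.sign_of_neg h0, abs_of_neg h0]; ring
      · exact absurd h0 hx
      · rw [Real.sign_of_pos h0, abs_of_pos h0]; ring
    have habs : |Real.sign x| = 1 := by
      rcases lt_trichotomy x 0 with h0 | h0 | h0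
      · rw [Real.sign_of_neg h0]; norm_num
      · exact absurd h0 hx
      · rw [Real.sign_of_pos h0]; norm_num
    have : x - Real.sign x * (|x| - ζ) = Real.sign x * ζ := by
      rw [mul_sub, hs]; ring
    rw [this, abs_mul, habs, one_mul, abs_of_nonneg hζ]

/-- properties of the soft-thresholding step. -/
theorem softThresh_supp_subset_and_inf_bound
    {I₁ I₂ I₃ : ℕ}
    (Xs Ss Xk : Tensor I₁ I₂ I₃) (ζ : ℝ)
    (hζ : infNorm (Xs - Xk) ≤ ζ) :
    supp (softThresh ζ (Xs + Ss - Xk)) ⊆ supp Ss ∧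
    infNorm (Ss - softThresh ζ (Xs + Ss - Xk)) ≤ infNorm (Xs - Xk) + ζ ∧
    infNorm (Xs - Xk) + ζ ≤ 2 * ζ := by
  have hnn : 0 ≤ infNorm (Xs - Xk) := infNorm_nonneg' _
  have hζ0 : 0 ≤ ζ := le_trans hnn hζ
  have hd : ∀ i j k, |(Xs i j k - Xk i j k)| ≤ ζ := fun i j k =>
    le_trans (le_infNorm (Xs - Xk) i j k) hζ
  refine ⟨?_, ?_, by linarith⟩
  · rintro ⟨i, j, k⟩ hp hz
    apply hp
    simp only [supp, Set.mem_setOf_eq, not_not] at hz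
    have hx : (Xs + Ss - Xk) i j k = Xs i j k - Xk i j k := by
      simp [hz, Pi.add_apply, Pi.sub_apply]
    simp only [softThresh, Set.mem_setOf_eq, hx]
    rw [max_eq_left (by have := hd i j k; linarith)]
    simp
  · refine infNorm_le _ _ (by linarith) fun i j k => ?_
    have hkey : |(Xs + Ss - Xk) i j k - softThresh ζ (Xs + Ss - Xk) i j k| ≤ ζ :=
      soft_dist ζ _ hζ0
    have h2 : (Ss - softThresh ζ (Xs + Ss - Xk)) i j k =
        ((Xs + Ss - Xk) i j k - softThresh ζ (Xs + Ss - Xk) i j k) - (Xs i j k - Xk i j k) := by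
      simp [Pi.sub_apply, Pi.add_apply]; ring
    rw [h2]
    calc |_ - _| ≤ |(Xs + Ss - Xk) i j k - softThresh ζ (Xs + Ss - Xk) i j k| + |Xs i j k - Xk i j k| := abs_sub _ _
      _ ≤ ζ + infNorm (Xs - Xk) := add_le_add hkey (le_infNorm (Xs - Xk) i j k)
      _ = infNorm (Xs - Xk) + ζ := by ring
end
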